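/- arXiv:1802.03646 — 3 statements merged into one kernel-verified Lean document; each statement's English description precedes it below -/
import Mathlib

section
/- Let g : [0,1] → [0,1] be defined by g(x) = 2x for x < 1/2 and g(x) = 2(1-x) for x ≥ 1/2 (the tent map). Then for every positive integer r and every x ∈ [0,1], the piecewise linear interpolation f_r of x^2 with breakpoints k/2^r satisfies f_r(x) = x - Σ_{i=1}^{r} 2^{-2i} g^{∘i}(x), where g^{∘i} denotes the i-th iterate of g. -/
open Set

/-!
Since `tent x * (1 - tent x) = 4 * x * (1 - x) - tent x`, unfolding `x * (1 - x)` along the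
orbit of the tent map gives
`x - x ^ 2 = ∑ i ∈ [1, r], 4⁻¹ ^ i * tent^[i] x + 4⁻¹ ^ r * tent^[r] x * (1 - tent^[r] x)`.
On a dyadic interval `[p, q]` of length `2⁻¹ ^ r` the iterate `tent^[r]` is `2 ^ r (x - p)` or
`2 ^ r (q - x)`, so the remainder is `(x - p) * (q - x)` and the right-hand side of the theorem is
`x ^ 2 + (x - p) * (q - x) = (p + q) * x - p * q`, the chord of `x ^ 2` over `[p, q]`. An affine
function interpolating `x ^ 2` at `p` and `q` is that same chord.
-/

noncomputable def tent (x : ℝ) : ℝ := if x < 1 / 2 then 2 * x else 2 * (1 - x)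

lemma tent_of_le_half {x : ℝ} (hx : x ≤ 1 / 2) : tent x = 2 * x := by
  rcases hx.lt_or_eq with hx | rfl
  · rw [tent, if_pos hx]
  · norm_num [tent]

lemma tent_of_half_le {x : ℝ} (hx : 1 / 2 ≤ x) : tent x = 2 * (1 - x) := by
  rw [tent, if_neg hx.not_gt]

lemma mul_one_sub_eq_tent (x : ℝ) : x * (1 - x) = (tent x + tent x * (1 - tent x)) / 4 := by
  unfold tent
  split_ifs <;> ring

lemma mul_one_sub_eq_sum_tent_iterate (r : ℕ) (x : ℝ) :
    x * (1 - x) = ∑ i ∈ Finset.Icc 1 r, (4 : ℝ)⁻¹ ^ i * tent^[i] x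
      + (4 : ℝ)⁻¹ ^ r * (tent^[r] x * (1 - tent^[r] x)) := by
  induction r with
  | zero => simp
  | succ r ih =>
    rw [Finset.sum_Icc_succ_top (Nat.le_add_left 1 r), Function.iterate_succ_apply']
    linear_combination ih + (4 : ℝ)⁻¹ ^ r * mul_one_sub_eq_tent (tent^[r] x)

lemma tent_iterate_eq_or (r : ℕ) {k : ℤ} {x : ℝ} (hx : x ∈ Icc 0 1) (h₁ : k ≤ 2 ^ r * x)
    (h₂ : 2 ^ r * x ≤ k + 1) :
    tent^[r] x = 2 ^ r * x - k ∨ tent^[r] x = k + 1 - 2 ^ r * x := by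
  induction r generalizing k x with
  | zero =>
    simp only [pow_zero, one_mul, Function.iterate_zero, id_eq] at h₁ h₂ ⊢
    have hk₁ : k ≤ 1 := by exact_mod_cast h₁.trans hx.2
    have hk₂ : -1 ≤ k := by exact_mod_cast (by linarith [hx.1] : (-1 : ℝ) ≤ k)
    obtain rfl | rfl | rfl : k = -1 ∨ k = 0 ∨ k = 1 := by omega
    · right; push_cast at h₂ ⊢; linarith [hx.1]
    · left; simp
    · right; push_cast at h₁ ⊢; linarith [hx.2]
  | succ r ih =>
    have h2r : (2 : ℝ) ^ (r + 1) = 2 ^ r * 2 := pow_succ 2 r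
    rw [Function.iterate_succ_apply, h2r]
    rw [h2r] at h₁ h₂
    rcases le_total x (1 / 2) with hhalf | hhalf
    · rw [tent_of_le_half hhalf]
      rcases ih (k := k) (x := 2 * x) ⟨by linarith [hx.1], by linarith⟩ (by linarith)
          (by linarith) with h | h
      · left; linarith
      · right; linarith
    · rw [tent_of_half_le hhalf]
      -- `2 * (1 - x)` lies in the dyadic interval mirror to that of `x`
      have hmirror := ih (k := 2 ^ (r + 1) - k - 1) (x := 2 * (1 - x))
      push_cast at hmirror
      rw [h2r] at hmirror
      rcases hmirror ⟨by linarith [hx.2], by linarith⟩ (by linarith) (by linarith) with h | h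
      · right; linarith
      · left; linarith

lemma tent_iterate_mul_one_sub (r : ℕ) {k : ℤ} {x : ℝ} (hx : x ∈ Icc 0 1)
    (h₁ : k ≤ 2 ^ r * x) (h₂ : 2 ^ r * x ≤ k + 1) :
    tent^[r] x * (1 - tent^[r] x) = (2 ^ r * x - k) * (k + 1 - 2 ^ r * x) := by
  rcases tent_iterate_eq_or r hx h₁ h₂ with h | h <;> rw [h] <;> ring

lemma sub_sum_tent_iterate_eq_chord (r : ℕ) {k : ℤ} {x : ℝ} (hx : x ∈ Icc 0 1)
    (h₁ : k ≤ 2 ^ r * x) (h₂ : 2 ^ r * x ≤ k + 1) :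
    x - ∑ i ∈ Finset.Icc 1 r, (4 : ℝ)⁻¹ ^ i * tent^[i] x
      = (k / 2 ^ r + (k + 1) / 2 ^ r) * x - k / 2 ^ r * ((k + 1) / 2 ^ r) := by
  have h := mul_one_sub_eq_sum_tent_iterate r x
  rw [tent_iterate_mul_one_sub r hx h₁ h₂, inv_pow] at h
  have h4 : (4 : ℝ) ^ r = 2 ^ r * 2 ^ r := by rw [← mul_pow]; norm_num
  rw [h4] at h
  generalize ∑ i ∈ Finset.Icc 1 r, (4 : ℝ)⁻¹ ^ i * tent^[i] x = S at h ⊢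
  field_simp at h ⊢
  linear_combination h

lemma eq_chord_sq_of_affine {f : ℝ → ℝ} {p q a b : ℝ} (hpq : p < q)
    (hf : ∀ x ∈ Icc p q, f x = a * x + b) (hp : f p = p ^ 2) (hq : f q = q ^ 2) :
    ∀ x ∈ Icc p q, f x = (p + q) * x - p * q := by
  have hp' := hf p ⟨le_rfl, hpq.le⟩
  have hq' := hf q ⟨hpq.le, le_rfl⟩
  have ha : a = p + q := by
    apply mul_right_cancel₀ (sub_ne_zero.mpr hpq.ne')
    linear_combination hq'.symm.trans hq - hp'.symm.trans hp
  intro x hx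
  rw [hf x hx]
  linear_combination x * ha + hp'.symm.trans hp - p * ha

lemma exists_nat_le_mul_le_succ {n : ℕ} (hn : 0 < n) {x : ℝ} (hx : x ∈ Icc 0 1) :
    ∃ k < n, (k : ℝ) ≤ n * x ∧ n * x ≤ k + 1 := by
  rcases hx.2.lt_or_eq with hx1 | rfl
  · have hnx : n * x < n := by
      have : (0 : ℝ) < n := by exact_mod_cast hn
      nlinarith
    refine ⟨⌊n * x⌋₊, ?_, Nat.floor_le (by positivity [hx.1]), (Nat.lt_floor_add_one _).le⟩
    exact_mod_cast (Nat.floor_lt (by positivity [hx.1])).2 hnx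
  · exact ⟨n - 1, by omega, by simp [Nat.cast_sub hn], by simp [Nat.cast_sub hn]⟩

lemma two_zpow_neg_two_mul (i : ℕ) : (2 : ℝ) ^ (-(2 : ℤ) * i) = (4 : ℝ)⁻¹ ^ i := by
  rw [neg_mul, zpow_neg, zpow_mul, zpow_natCast, inv_pow]
  norm_num

theorem stmt1_general (r : ℕ) (fr : ℝ → ℝ)
    (hinterp : ∀ k : ℕ, k ≤ 2 ^ r → fr ((k : ℝ) / 2 ^ r) = ((k : ℝ) / 2 ^ r) ^ 2)
    (haffine : ∀ k : ℕ, k < 2 ^ r → ∃ a b : ℝ,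
      ∀ x ∈ Icc ((k : ℝ) / 2 ^ r) (((k : ℝ) + 1) / 2 ^ r), fr x = a * x + b)
    (g : ℝ → ℝ)
    (hg : ∀ x : ℝ, g x = if x < 1 / 2 then 2 * x else 2 * (1 - x)) :
    ∀ x ∈ Icc (0 : ℝ) 1,
      fr x = x - ∑ i ∈ Finset.Icc 1 r, (2 : ℝ) ^ (-(2 : ℤ) * i) * g^[i] x := by
  obtain rfl : g = tent := funext hg
  intro x hx
  obtain ⟨k, hk, h₁, h₂⟩ := exists_nat_le_mul_le_succ (pow_pos two_pos r) hx
  push_cast at h₁ h₂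
  have h2r : (0 : ℝ) < 2 ^ r := by positivity
  have hxI : x ∈ Icc ((k : ℝ) / 2 ^ r) (((k : ℝ) + 1) / 2 ^ r) :=
    ⟨by rw [div_le_iff₀ h2r]; linarith, by rw [le_div_iff₀ h2r]; linarith⟩
  obtain ⟨a, b, hab⟩ := haffine k hk
  have hinterp_succ := hinterp (k + 1) hk
  push_cast at hinterp_succ
  have hpq : (k : ℝ) / 2 ^ r < (k + 1) / 2 ^ r := by gcongr; linarith
  simp_rw [two_zpow_neg_two_mul]
  rw [eq_chord_sq_of_affine hpq hab (hinterp k hk.le) hinterp_succ x hxI,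
    sub_sum_tent_iterate_eq_chord r (k := k) hx (by push_cast; linarith)
      (by push_cast; linarith)]
  push_cast
  ring

/-- The piecewise linear interpolation of x² equals x - Σ_{i=1}^r 2^{-2i} g^{∘i}(x) with g the tent map. -/
theorem stmt1 (r : ℕ) (hr : 0 < r) (fr : ℝ → ℝ)
    (hinterp : ∀ k : ℕ, k ≤ 2 ^ r → fr ((k : ℝ) / 2 ^ r) = ((k : ℝ) / 2 ^ r) ^ 2)
    (hcont : ContinuousOn fr (Icc 0 1))
    (haffine : ∀ k : ℕ, k < 2 ^ r → ∃ a b : ℝ,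
      ∀ x ∈ Icc ((k : ℝ) / 2 ^ r) (((k : ℝ) + 1) / 2 ^ r), fr x = a * x + b)
    (g : ℝ → ℝ)
    (hg : ∀ x : ℝ, g x = if x < 1 / 2 then 2 * x else 2 * (1 - x)) :
    ∀ x ∈ Icc (0 : ℝ) 1,
      fr x = x - ∑ i ∈ Finset.Icc 1 r, (2 : ℝ) ^ (-(2 : ℤ) * i) * g^[i] x :=
  stmt1_general r fr hinterp haffine g hg
end

section
/- Let f : [0,1] → ℝ be 1-Lipschitz, and fix positive integers t and T. Then there exists a 1-Lipschitz continuous function f̃ : [0,1] → ℝ such that f̃(i/T) = ⌈T f(i/T) / 2^{-t}⌉ · 2^{-t}/T for every i ∈ {0,1,...,T}, and |f̃(x) - f(x)| ≤ 2^{-t}/T for all x ∈ [0,1]. -/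
/-!
Round `f` up on the grid `{i/T}` to the lattice `E ℤ`, `E = 2^{-t}/T`. Grid points are an integer
number of steps `E` apart, and rounding up commutes with translation by `E ℤ`, so the rounded grid
values are still `1`-Lipschitz; McShane's extension carries them to a `1`-Lipschitz `g` on `ℝ`.
Clamping `g` between `f` and `f + E` keeps it `1`-Lipschitz and `E`-close to `f`, and changes
nothing on the grid, where `f ≤ roundUp E f < f + E`.
-/

open Set NNReal

noncomputable def roundUp (E a : ℝ) : ℝ := ⌈a / E⌉ * E

section roundUp

variable {E : ℝ}

theorem le_roundUp (hE : 0 < E) (a : ℝ) : a ≤ roundUp E a :=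
  (div_le_iff₀ hE).1 (Int.le_ceil _)

theorem roundUp_lt_add (hE : 0 < E) (a : ℝ) : roundUp E a < a + E := by
  have h : (⌈a / E⌉ : ℝ) < a / E + 1 := Int.ceil_lt_add_one _
  calc roundUp E a < (a / E + 1) * E := mul_lt_mul_of_pos_right h hE
    _ = a + E := by field_simp

theorem roundUp_le_roundUp_add_intCast_mul (hE : 0 < E) {a b : ℝ} (n : ℤ)
    (h : a ≤ b + n * E) : roundUp E a ≤ roundUp E b + n * E := by
  have hdiv : a / E ≤ b / E + n := by
    rw [div_le_iff₀ hE, add_mul, div_mul_cancel₀ _ hE.ne']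
    exact h
  have hceil : ⌈a / E⌉ ≤ ⌈b / E⌉ + n := by
    rw [← Int.ceil_add_intCast]
    exact Int.ceil_le_ceil hdiv
  calc roundUp E a ≤ ((⌈b / E⌉ + n : ℤ) : ℝ) * E :=
        mul_le_mul_of_nonneg_right (by exact_mod_cast hceil) hE.le
    _ = roundUp E b + n * E := by push_cast [roundUp]; ring

theorem LipschitzOnWith.roundUp_comp {α : Type*} [PseudoMetricSpace α] {f : α → ℝ} {s : Set α}
    (hE : 0 < E) (hf : LipschitzOnWith 1 f s)
    (hs : ∀ x ∈ s, ∀ y ∈ s, ∃ n : ℤ, dist x y = n * E) :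
    LipschitzOnWith 1 (fun x => roundUp E (f x)) s := by
  refine LipschitzOnWith.of_le_add fun x hx y hy => ?_
  obtain ⟨n, hn⟩ := hs x hx y hy
  have h := hf.le_add_mul hx hy
  rw [NNReal.coe_one, one_mul, hn] at h
  rw [hn]
  exact roundUp_le_roundUp_add_intCast_mul hE n h

end roundUp

theorem LipschitzOnWith.max_min_add {α : Type*} [PseudoMetricSpace α] {f g : α → ℝ} {s : Set α}
    {K : ℝ≥0} (hf : LipschitzOnWith K f s) (hg : LipschitzOnWith K g s) (E : ℝ) :
    LipschitzOnWith K (fun x => max (f x) (min (f x + E) (g x))) s := by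
  have h := hf.to_restrict.max ((hf.to_restrict.add (LipschitzWith.const E)).min hg.to_restrict)
  simp only [add_zero, max_self] at h
  exact lipschitzOnWith_iff_restrict.2 h

theorem abs_max_min_add_sub_le {E : ℝ} (hE : 0 ≤ E) (a b : ℝ) :
    |max a (min (a + E) b) - a| ≤ E := by
  rw [abs_sub_le_iff]
  constructor
  · have : max a (min (a + E) b) ≤ a + E := max_le (by linarith) (min_le_left _ _)
    linarith
  · linarith [le_max_left a (min (a + E) b)]

theorem exists_dist_natCast_div_eq_intCast_mul (i j t T : ℕ) :
    ∃ n : ℤ, dist ((i : ℝ) / T) ((j : ℝ) / T) = n * ((2 : ℝ) ^ (-(t : ℤ)) / T) := by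
  refine ⟨|(i : ℤ) - j| * 2 ^ t, ?_⟩
  rw [Real.dist_eq, div_sub_div_same, abs_div, Nat.abs_cast, zpow_neg, zpow_natCast]
  push_cast
  field_simp

theorem stmt13_general (f : ℝ → ℝ) (hf : LipschitzOnWith 1 f (Icc 0 1))
    (t T : ℕ) (hT : 0 < T) :
    ∃ ft : ℝ → ℝ, ContinuousOn ft (Icc 0 1) ∧ LipschitzOnWith 1 ft (Icc 0 1) ∧
      (∀ i : ℕ, i ≤ T →
        ft ((i : ℝ) / T) =
          ((⌈(T : ℝ) * f ((i : ℝ) / T) / (2 : ℝ) ^ (-(t : ℤ))⌉ : ℤ) : ℝ) *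
            ((2 : ℝ) ^ (-(t : ℤ)) / T)) ∧
      ∀ x ∈ Icc (0 : ℝ) 1, |ft x - f x| ≤ (2 : ℝ) ^ (-(t : ℤ)) / T := by
  set E : ℝ := (2 : ℝ) ^ (-(t : ℤ)) / T with hE_def
  have hE : 0 < E := by positivity
  set grid : Set ℝ := (fun i : ℕ => (i : ℝ) / T) '' Iic T
  have hgrid : grid ⊆ Icc 0 1 := by
    rintro _ ⟨i, hi, rfl⟩
    exact ⟨by positivity, div_le_one_of_le₀ (by exact_mod_cast hi) T.cast_nonneg⟩
  obtain ⟨g, hg, hfg⟩ := ((hf.mono hgrid).roundUp_comp hE (by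
    rintro _ ⟨i, -, rfl⟩ _ ⟨j, -, rfl⟩
    exact exists_dist_natCast_div_eq_intCast_mul i j t T)).extend_real
  have hft := hf.max_min_add hg.lipschitzOnWith E
  refine ⟨_, hft.continuousOn, hft, fun i hi => ?_, fun x _ => abs_max_min_add_sub_le hE.le _ _⟩
  rw [← hfg (show (i : ℝ) / T ∈ grid from ⟨i, hi, rfl⟩),
    min_eq_right (roundUp_lt_add hE _).le, max_eq_right (le_roundUp hE _), roundUp, hE_def,
    div_div_eq_mul_div, mul_comm (f _)]

/-- Proposition 4: existence of the transformed function f̃. -/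
theorem stmt13 (f : ℝ → ℝ) (hf : LipschitzOnWith 1 f (Icc 0 1))
    (t T : ℕ) (ht : 0 < t) (hT : 0 < T) :
    ∃ ft : ℝ → ℝ, ContinuousOn ft (Icc 0 1) ∧ LipschitzOnWith 1 ft (Icc 0 1) ∧
      (∀ i : ℕ, i ≤ T →
        ft ((i : ℝ) / T) =
          ((⌈(T : ℝ) * f ((i : ℝ) / T) / (2 : ℝ) ^ (-(t : ℤ))⌉ : ℤ) : ℝ) *
            ((2 : ℝ) ^ (-(t : ℤ)) / T)) ∧
      ∀ x ∈ Icc (0 : ℝ) 1, |ft x - f x| ≤ (2 : ℝ) ^ (-(t : ℤ)) / T :=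
  stmt13_general f hf t T hT
end

section
/- Define M : [2,∞) → ℝ by M(λ) = θ · λ · log₂(λ) · (log₂ c)^{1/(λ-1) + 1}, where θ > 0 and c > 4 are constants with 2 ln(log₂ c) > 1 + 1/ln 2 (so that M'(2) < 0). Then M has exactly one critical point λ_opt in [2,∞), M is decreasing on [2, λ_opt) and increasing on (λ_opt, ∞); hence λ_opt is the unique global minimum of M on [2,∞). -/
open Set


noncomputable def Sfun (a l : ℝ) : ℝ :=
  Real.log l + 1 - a * (l * Real.log l / (l - 1) ^ 2)

lemma aux_log {x : ℝ} (hx : 1 < x) : x - 1 < (x + 1) * Real.log x := by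
  have hx0 : 0 < x := by linarith
  have h1 : Real.log x⁻¹ < x⁻¹ - 1 :=
    Real.log_lt_sub_one_of_pos (by positivity) (by
      intro h; rw [inv_eq_one] at h; linarith)
  rw [Real.log_inv] at h1
  have hlog : 1 - x⁻¹ < Real.log x := by linarith
  have hxlog : x - 1 < x * Real.log x := by
    have := mul_lt_mul_of_pos_left hlog hx0
    have hxi : x * x⁻¹ = 1 := mul_inv_cancel₀ hx0.ne'
    nlinarith
  have hlogpos : 0 < Real.log x := Real.log_pos hx
  nlinarith

lemma Sfun_hasDerivAt (a : ℝ) {x : ℝ} (hx : 1 < x) :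
    HasDerivAt (Sfun a)
      (x⁻¹ - a * (((Real.log x + 1) * (x - 1) ^ 2 -
        (x * Real.log x) * (2 * (x - 1))) / ((x - 1) ^ 2) ^ 2)) x := by
  have hx0 : 0 < x := by linarith
  have hne : (x - 1) ^ 2 ≠ 0 := pow_ne_zero 2 (sub_ne_zero.mpr hx.ne')
  have h1 : HasDerivAt (fun l : ℝ => l * Real.log l) (Real.log x + 1) x := by
    have := (hasDerivAt_id x).mul (Real.hasDerivAt_log hx0.ne')
    refine this.congr_deriv ?_
    field_simp
    simp only [id]; ring
  have h2 : HasDerivAt (fun l : ℝ => (l - 1) ^ 2) (2 * (x - 1)) x := by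
    have := ((hasDerivAt_id x).sub_const 1).pow 2
    refine this.congr_deriv ?_
    simp
  have hdiv := h1.div h2 hne
  have hlog := (Real.hasDerivAt_log hx0.ne').add_const 1
  have := hlog.sub (hdiv.const_mul a)
  exact this

lemma Sfun_deriv_pos {a x : ℝ} (ha : 0 < a) (hx : 1 < x) :
    0 < x⁻¹ - a * (((Real.log x + 1) * (x - 1) ^ 2 -
        (x * Real.log x) * (2 * (x - 1))) / ((x - 1) ^ 2) ^ 2) := by
  have hx1 : 0 < x - 1 := by linarith
  have hkey : x - 1 - (x + 1) * Real.log x < 0 := by linarith [aux_log hx]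
  have hnum : (Real.log x + 1) * (x - 1) ^ 2 - (x * Real.log x) * (2 * (x - 1)) < 0 := by
    have heq : (Real.log x + 1) * (x - 1) ^ 2 - (x * Real.log x) * (2 * (x - 1))
        = (x - 1) * (x - 1 - (x + 1) * Real.log x) := by ring
    rw [heq]
    exact mul_neg_of_pos_of_neg hx1 hkey
  have hden : 0 < ((x - 1) ^ 2) ^ 2 := by positivity
  have : a * (((Real.log x + 1) * (x - 1) ^ 2 -
      (x * Real.log x) * (2 * (x - 1))) / ((x - 1) ^ 2) ^ 2) < 0 :=
    mul_neg_of_pos_of_neg ha (div_neg_of_neg_of_pos hnum hden)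
  have hxinv : 0 < x⁻¹ := by positivity
  linarith

lemma M_hasDerivAt (K a : ℝ) {x : ℝ} (hx : 1 < x) :
    HasDerivAt (fun l : ℝ => K * ((l * Real.log l) * Real.exp (a * ((l - 1)⁻¹ + 1))))
      (K * (Real.exp (a * ((x - 1)⁻¹ + 1)) * Sfun a x)) x := by
  have hx0 : 0 < x := by linarith
  have hne : x - 1 ≠ 0 := by intro h; nlinarith [h]
  have h1 : HasDerivAt (fun l : ℝ => l * Real.log l) (Real.log x + 1) x := by
    have := (hasDerivAt_id x).mul (Real.hasDerivAt_log hx0.ne')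
    refine this.congr_deriv ?_
    field_simp
    simp only [id]; ring
  have hu : HasDerivAt (fun l : ℝ => a * ((l - 1)⁻¹ + 1)) (a * (-1 / (x - 1) ^ 2)) x := by
    exact ((((hasDerivAt_id x).sub_const 1).inv hne).add_const 1).const_mul a
  have hexp := hu.exp
  have hprod := (h1.mul hexp).const_mul K
  refine hprod.congr_deriv ?_
  unfold Sfun
  field_simp
  ring_nf

lemma master (K a : ℝ) (hK : 0 < K) (ha2 : 1 + 1 / Real.log 2 < 2 * a)
    (M : ℝ → ℝ)
    (hM : M = fun l : ℝ => K * ((l * Real.log l) * Real.exp (a * ((l - 1)⁻¹ + 1)))) :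
    ∃ lopt : ℝ, 2 < lopt ∧
      (∀ x ∈ Ici (2 : ℝ), (deriv M x = 0 ↔ x = lopt)) ∧
      StrictAntiOn M (Icc 2 lopt) ∧
      StrictMonoOn M (Ici lopt) ∧
      ∀ x ∈ Ici (2 : ℝ), x ≠ lopt → M lopt < M x := by
  subst hM
  have hlog2 : 0 < Real.log 2 := Real.log_pos (by norm_num)
  have ha : 0 < a := by
    have : 0 < 1 / Real.log 2 := by positivity
    linarith
  -- S is strictly monotone on Ici 2
  have Smono : StrictMonoOn (Sfun a) (Ici 2) := by
    apply strictMonoOn_of_deriv_pos (convex_Ici 2)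
    · intro x hx
      exact (Sfun_hasDerivAt a (by simp at hx; linarith : (1:ℝ) < x)).continuousAt.continuousWithinAt
    · intro x hx
      rw [interior_Ici] at hx
      have hx1 : (1:ℝ) < x := by simp at hx; linarith
      rw [(Sfun_hasDerivAt a hx1).deriv]
      exact Sfun_deriv_pos ha hx1
  -- S(2) < 0
  have hS2 : Sfun a 2 < 0 := by
    have h1 : (1 + 1 / Real.log 2) * Real.log 2 = Real.log 2 + 1 := by field_simp
    have h2 : (1 + 1 / Real.log 2) * Real.log 2 < 2 * a * Real.log 2 :=
      mul_lt_mul_of_pos_right ha2 hlog2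
    show Real.log 2 + 1 - a * (2 * Real.log 2 / (2 - 1) ^ 2) < 0
    norm_num
    nlinarith
  -- S(a+3) > 0
  set B := a + 3 with hB
  have hB1 : (1:ℝ) < B := by simp [hB]; linarith
  have hSB : 0 < Sfun a B := by
    have hlogB : 0 < Real.log B := Real.log_pos hB1
    have hden : 0 < (B - 1) ^ 2 := by nlinarith
    have hkey : a * B < (B - 1) ^ 2 := by simp only [hB]; nlinarith
    have hlt : a * B / (B - 1) ^ 2 < 1 := (div_lt_one hden).mpr hkey
    have h3 := mul_lt_mul_of_pos_right hlt hlogB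
    have heq : a * (B * Real.log B / (B - 1) ^ 2) = a * B / (B - 1) ^ 2 * Real.log B := by
      ring
    show 0 < Real.log B + 1 - a * (B * Real.log B / (B - 1) ^ 2)
    rw [heq]
    nlinarith
  have h2B : (2:ℝ) ≤ B := by simp [hB]; linarith
  have contS : ContinuousOn (Sfun a) (Icc 2 B) := by
    intro x hx
    exact (Sfun_hasDerivAt a (by linarith [hx.1] : (1:ℝ) < x)).continuousAt.continuousWithinAt
  have hmem : (0:ℝ) ∈ Ioo (Sfun a 2) (Sfun a B) := ⟨hS2, hSB⟩
  obtain ⟨lopt, hloptIoo, hlopt0⟩ := intermediate_value_Ioo h2B contS hmem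
  have hlopt2 : 2 < lopt := hloptIoo.1
  have hloptIci : lopt ∈ Ici (2:ℝ) := hlopt2.le
  -- derivative formula
  have hderiv : ∀ x : ℝ, 1 < x →
      deriv (fun l : ℝ => K * ((l * Real.log l) * Real.exp (a * ((l - 1)⁻¹ + 1)))) x
        = K * (Real.exp (a * ((x - 1)⁻¹ + 1)) * Sfun a x) :=
    fun x hx => (M_hasDerivAt K a hx).deriv
  have hSsign : ∀ x ∈ Ici (2:ℝ), (Sfun a x = 0 ↔ x = lopt) := by
    intro x hx
    constructor
    · intro h
      by_contra hne
      rcases lt_or_gt_of_ne hne with hlt | hlt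
      · have := Smono hx hloptIci hlt
        rw [h, hlopt0] at this; exact lt_irrefl 0 this
      · have := Smono hloptIci hx hlt
        rw [h, hlopt0] at this; exact lt_irrefl 0 this
    · intro h; rw [h]; exact hlopt0
  have hanti : StrictAntiOn (fun l : ℝ => K * ((l * Real.log l) * Real.exp (a * ((l - 1)⁻¹ + 1)))) (Icc 2 lopt) := by
    apply strictAntiOn_of_deriv_neg (convex_Icc 2 lopt)
    · intro x hx
      exact (M_hasDerivAt K a (by linarith [hx.1] : (1:ℝ) < x)).continuousAt.continuousWithinAt
    · intro x hx
      rw [interior_Icc] at hx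
      have hx1 : (1:ℝ) < x := by linarith [hx.1]
      rw [hderiv x hx1]
      have hSx : Sfun a x < 0 := by
        have := Smono (by simpa using hx.1.le : x ∈ Ici (2:ℝ)) hloptIci hx.2
        rw [hlopt0] at this; exact this
      exact mul_neg_of_pos_of_neg hK (mul_neg_of_pos_of_neg (Real.exp_pos _) hSx)
  have hmono : StrictMonoOn (fun l : ℝ => K * ((l * Real.log l) * Real.exp (a * ((l - 1)⁻¹ + 1)))) (Ici lopt) := by
    apply strictMonoOn_of_deriv_pos (convex_Ici lopt)
    · intro x hx
      exact (M_hasDerivAt K a (by simp at hx; linarith : (1:ℝ) < x)).continuousAt.continuousWithinAt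
    · intro x hx
      rw [interior_Ici] at hx
      have hx1 : (1:ℝ) < x := by simp at hx; linarith
      rw [hderiv x hx1]
      have hSx : 0 < Sfun a x := by
        have := Smono hloptIci (by simp at hx ⊢; linarith : x ∈ Ici (2:ℝ)) hx
        rw [hlopt0] at this; exact this
      exact mul_pos hK (mul_pos (Real.exp_pos _) hSx)
  refine ⟨lopt, hlopt2, ?_, hanti, hmono, ?_⟩
  · intro x hx
    have hx1 : (1:ℝ) < x := by simp at hx; linarith
    rw [hderiv x hx1]
    have hE : 0 < Real.exp (a * ((x - 1)⁻¹ + 1)) := Real.exp_pos _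
    rw [← hSsign x hx]
    constructor
    · intro h
      rcases mul_eq_zero.mp h with h' | h'
      · exact absurd h' hK.ne'
      rcases mul_eq_zero.mp h' with h'' | h''
      · exact absurd h'' hE.ne'
      · exact h''
    · intro h; rw [h]; ring
  · intro x hx hne
    rcases lt_or_gt_of_ne hne with h | h
    · exact hanti ⟨hx, h.le⟩ ⟨hlopt2.le, le_rfl⟩ h
    · exact hmono (le_refl lopt) h.le h

/-- Existence and uniqueness of the optimal λ minimizing the memory bound M(λ). -/
theorem stmt15 (θ c : ℝ) (hθ : 0 < θ) (hc : 4 < c)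
    (hcond : 2 * Real.log (Real.log c / Real.log 2) > 1 + 1 / Real.log 2)
    (M : ℝ → ℝ)
    (hM : ∀ l : ℝ, M l = θ * l * (Real.log l / Real.log 2) *
        (Real.log c / Real.log 2) ^ ((1 : ℝ) / (l - 1) + 1)) :
    ∃ lopt : ℝ, 2 < lopt ∧
      (∀ x ∈ Ici (2 : ℝ), (deriv M x = 0 ↔ x = lopt)) ∧
      StrictAntiOn M (Icc 2 lopt) ∧
      StrictMonoOn M (Ici lopt) ∧
      ∀ x ∈ Ici (2 : ℝ), x ≠ lopt → M lopt < M x := by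
  have hlog2 : 0 < Real.log 2 := Real.log_pos (by norm_num)
  have hθ₂ : 0 < Real.log c / Real.log 2 := by
    have : 0 < Real.log c := Real.log_pos (by linarith)
    positivity
  apply master (θ / Real.log 2) (Real.log (Real.log c / Real.log 2))
    (by positivity) hcond
  funext l
  rw [hM l, Real.rpow_def_of_pos hθ₂, one_div]
  ring
end
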